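/- Let p : E → B be a fibration of groupoids, B an object of B, and R(B) a set of representatives of the isomorphism classes of objects of B. Then there is a bijection ∐_{B ∈ R(B)} π₀(Fib(p,B))/Aut_B(B) → π₀(E) sending the orbit of [A]_{Fib(p,B)} to the class [A]_E. -/

import Mathlib

open CategoryTheory

universe u u'

variable {E : Type u} [Groupoid E] {B : Type u'} [Groupoid B]

/-- A fibration of groupoids: every morphism of the base with target `p.obj e`
lifts to a morphism of the total groupoid with target `e`. -/
def IsGrpdFibration (p : E ⥤ B) : Prop :=
  ∀ (e : E) (b' : B) (h : b' ⟶ p.obj e),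
    ∃ (e' : E) (g : e' ⟶ e) (he : p.obj e' = b'), p.map g = eqToHom he ≫ h

/-- The fibre of a functor of groupoids at an object of the base. -/
structure Fib (p : E ⥤ B) (b : B) where
  pt : E
  over' : p.obj pt = b

/-- The fibre is a groupoid: morphisms are the morphisms of `E` mapping to the identity. -/
instance fibGroupoid (p : E ⥤ B) (b : B) : Groupoid (Fib p b) where
  Hom a a' := {f : a.pt ⟶ a'.pt // p.map f = eqToHom (a.over'.trans a'.over'.symm)}
  id a := ⟨𝟙 a.pt, by simp⟩
  comp f g := ⟨f.1 ≫ g.1, by rw [Functor.map_comp, f.2, g.2, eqToHom_trans]⟩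
  id_comp f := Subtype.ext (Category.id_comp f.1)
  comp_id f := Subtype.ext (Category.comp_id f.1)
  assoc f g h := Subtype.ext (Category.assoc f.1 g.1 h.1)
  inv f := ⟨Groupoid.inv f.1, by
    rw [Groupoid.inv_eq_inv, Functor.map_inv]
    exact IsIso.inv_eq_of_hom_inv_id (by rw [f.2, eqToHom_trans, eqToHom_refl])⟩
  inv_comp f := Subtype.ext (Groupoid.inv_comp f.1)
  comp_inv f := Subtype.ext (Groupoid.comp_inv f.1)

/-! Every object of `E` lies in the fibre over some `b ∈ R`, after transporting it along a lift of
an isomorphism `p.obj e ≅ b`; two objects of fibres over representatives that are isomorphic in `E`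
lie over the same representative, and the image under `p` of an isomorphism between them is an
automorphism of that representative whose action relates their fibre components. -/

theorem eq_of_mem_of_isIsomorphic {C : Type*} [Category C] {R : Set C}
    (hR : ∀ c : C, ∃! r : C, r ∈ R ∧ Nonempty (c ≅ r)) {c₁ c₂ : C}
    (h₁ : c₁ ∈ R) (h₂ : c₂ ∈ R) (h : IsIsomorphic c₁ c₂) : c₁ = c₂ :=
  (hR c₁).unique ⟨h₁, ⟨Iso.refl c₁⟩⟩ ⟨h₂, h⟩

section

variable {p : E ⥤ B}

theorem IsGrpdFibration.exists_fib_lift (hp : IsGrpdFibration p) {b b' : B} (X : Fib p b)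
    (h : b' ⟶ b) : ∃ (X' : Fib p b') (g : X'.pt ⟶ X.pt),
      p.map g = eqToHom X'.over' ≫ h ≫ eqToHom X.over'.symm := by
  obtain ⟨e', g, he, hg⟩ := hp X.pt b' (h ≫ eqToHom X.over'.symm)
  exact ⟨⟨e', he⟩, g, hg⟩

namespace Fib

theorem isIsomorphic_of_hom_pt {b₁ b₂ : B} {X₁ : Fib p b₁} {X₂ : Fib p b₂}
    (ψ : X₁.pt ⟶ X₂.pt) : IsIsomorphic b₁ b₂ :=
  Groupoid.isIsomorphic_iff_nonempty_hom.2 ⟨eqToHom X₁.over'.symm ≫ p.map ψ ≫ eqToHom X₂.over'⟩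

variable (p) in
def toPi0 (b : B) : Quotient (isIsomorphicSetoid (Fib p b)) → Quotient (isIsomorphicSetoid E) :=
  Quotient.lift (fun A => ⟦A.pt⟧) fun _ _ ⟨φ⟩ =>
    Quotient.sound (Groupoid.isIsomorphic_iff_nonempty_hom.2 ⟨φ.hom.1⟩)

variable [∀ b : B, MulAction (Aut b) (Quotient (isIsomorphicSetoid (Fib p b)))]

variable (p) in
def IsLiftingAction : Prop :=
  ∀ (b : B) (g : Aut b) (X Xg : Fib p b) (glift : Xg.pt ⟶ X.pt),
    p.map glift = eqToHom Xg.over' ≫ g.hom ≫ eqToHom X.over'.symm →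
      g • (⟦X⟧ : Quotient (isIsomorphicSetoid (Fib p b))) = ⟦Xg⟧

theorem toPi0_smul (hp : IsGrpdFibration p) (hact : IsLiftingAction p) {b : B} (g : Aut b)
    (q : Quotient (isIsomorphicSetoid (Fib p b))) : toPi0 p b (g • q) = toPi0 p b q := by
  induction q using Quotient.inductionOn with
  | h X =>
    obtain ⟨Xg, glift, hglift⟩ := hp.exists_fib_lift X g.hom
    rw [hact b g X Xg glift hglift]
    exact Quotient.sound (Groupoid.isIsomorphic_iff_nonempty_hom.2 ⟨glift⟩)

theorem orbitRel_of_hom_pt (hact : IsLiftingAction p) {b : B} {X₁ X₂ : Fib p b}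
    (ψ : X₁.pt ⟶ X₂.pt) :
    MulAction.orbitRel (Aut b) (Quotient (isIsomorphicSetoid (Fib p b))) ⟦X₁⟧ ⟦X₂⟧ :=
  ⟨(Groupoid.isoEquivHom b b).symm (eqToHom X₁.over'.symm ≫ p.map ψ ≫ eqToHom X₂.over'),
    hact b _ X₂ X₁ ψ (by simp [Groupoid.isoEquivHom])⟩

def orbitsToPi0 (hp : IsGrpdFibration p) (hact : IsLiftingAction p) (R : Set B) :
    (Σ b : R, MulAction.orbitRel.Quotient (Aut b.1) (Quotient (isIsomorphicSetoid (Fib p b.1))))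
      → Quotient (isIsomorphicSetoid E) :=
  fun x => Quotient.lift (toPi0 p x.1.1) (by rintro _ q ⟨g, rfl⟩; exact toPi0_smul hp hact g q) x.2

theorem orbitsToPi0_injective (hp : IsGrpdFibration p) (hact : IsLiftingAction p) {R : Set B}
    (hR : ∀ b : B, ∃! r : B, r ∈ R ∧ Nonempty (b ≅ r)) :
    Function.Injective (orbitsToPi0 hp hact R) := by
  rintro ⟨b₁, ⟨⟨X₁⟩⟩⟩ ⟨b₂, ⟨⟨X₂⟩⟩⟩ h
  obtain ⟨ψ⟩ : IsIsomorphic X₁.pt X₂.pt := Quotient.exact h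
  obtain rfl : b₁ = b₂ :=
    Subtype.ext (eq_of_mem_of_isIsomorphic hR b₁.2 b₂.2 (isIsomorphic_of_hom_pt ψ.hom))
  exact congrArg (Sigma.mk b₁) (Quotient.sound (orbitRel_of_hom_pt hact ψ.hom))

theorem orbitsToPi0_surjective (hp : IsGrpdFibration p) (hact : IsLiftingAction p) {R : Set B}
    (hR : ∀ b : B, ∃! r : B, r ∈ R ∧ Nonempty (b ≅ r)) :
    Function.Surjective (orbitsToPi0 hp hact R) := by
  rintro ⟨e⟩
  obtain ⟨r, ⟨hr, ⟨φ⟩⟩, -⟩ := hR (p.obj e)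
  obtain ⟨X, g, -⟩ := hp.exists_fib_lift ⟨e, rfl⟩ φ.inv
  exact ⟨⟨⟨r, hr⟩, ⟦⟦X⟧⟧⟩, Quotient.sound (Groupoid.isIsomorphic_iff_nonempty_hom.2 ⟨g⟩)⟩

end Fib

end

/-- For a fibration of groupoids `p : E → B` and a set `R` of representatives of the
isomorphism classes of `B`, there is a bijection
`∐_{b ∈ R} π₀(Fib(p,b))/Aut_B(b) → π₀(E)` sending the orbit of `[A]` in `π₀(Fib(p,b))`
to the class `[A]` in `π₀(E)`. -/
theorem pi0_total_as_coproduct_of_orbit_quotients (p : E ⥤ B) (hp : IsGrpdFibration p)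
    (R : Set B) (hR : ∀ b : B, ∃! r : B, r ∈ R ∧ Nonempty (b ≅ r))
    (act : ∀ b : B, MulAction (Aut b) (Quotient (isIsomorphicSetoid (Fib p b))))
    (hact : ∀ (b : B) (g : Aut b) (X Xg : Fib p b) (glift : Xg.pt ⟶ X.pt),
        p.map glift = eqToHom Xg.over' ≫ g.hom ≫ eqToHom X.over'.symm →
        (act b).smul g (Quotient.mk (isIsomorphicSetoid (Fib p b)) X)
          = Quotient.mk (isIsomorphicSetoid (Fib p b)) Xg) :
    ∃ Φ : (Σ b : R, Quotient (@MulAction.orbitRel (Aut b.1)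
            (Quotient (isIsomorphicSetoid (Fib p b.1))) _ (act b.1)))
          ≃ Quotient (isIsomorphicSetoid E),
      ∀ (b : R) (A : Fib p b.1),
        Φ ⟨b, Quotient.mk (@MulAction.orbitRel (Aut b.1)
            (Quotient (isIsomorphicSetoid (Fib p b.1))) _ (act b.1))
            (Quotient.mk (isIsomorphicSetoid (Fib p b.1)) A)⟩
          = Quotient.mk (isIsomorphicSetoid E) A.pt :=
  ⟨Equiv.ofBijective (Fib.orbitsToPi0 hp hact R)
      ⟨Fib.orbitsToPi0_injective hp hact hR, Fib.orbitsToPi0_surjective hp hact hR⟩,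
    fun _ _ => rfl⟩
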